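/- Let (P,≻,q) be a problem and k > 1. Then GS^k(P,≻,q) is stable at (P,≻,q) if and only if GS^k(P,≻,q) = GS(P,≻,q). -/

import Mathlib

/-!
School choice framework following Bonkoungou–Nesterov,
"Reforms meet fairness concerns in school and college admissions".

Students `I` and schools `S` are finite types with `|I| > |S|`.
A strict preference relation of a student over `S ∪ {∅}` is represented by a list
of `Option S` containing every element exactly once (earlier = more preferred);
`none` is the outside option.  A strict priority order of a school is a list of
`I` containing every student exactly once (earlier = higher priority).
-/

namespace SchoolChoice

variable {I S : Type*} [Fintype I] [DecidableEq I] [Fintype S] [DecidableEq S]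

/-- `p` is a strict preference relation on `S ∪ {∅}`: a ranking list containing every
element of `Option S` exactly once. -/
def ValidPref (p : List (Option S)) : Prop := p.Nodup ∧ ∀ x : Option S, x ∈ p

/-- `pr` is a strict priority order: a ranking list containing every student exactly once. -/
def ValidPrio (pr : List I) : Prop := pr.Nodup ∧ ∀ i : I, i ∈ pr

/-- `a` is strictly preferred to `b` under the preference relation `p`. -/
def prefLt (p : List (Option S)) (a b : Option S) : Prop := p.idxOf a < p.idxOf b

/-- `i` has strictly higher priority than `j` under the priority order `pr`. -/
def prioLt (pr : List I) (i j : I) : Prop := pr.idxOf i < pr.idxOf j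

instance (p : List (Option S)) (a b : Option S) : Decidable (prefLt p a b) :=
  inferInstanceAs (Decidable (_ < _))

instance (pr : List I) (i j : I) : Decidable (prioLt pr i j) :=
  inferInstanceAs (Decidable (_ < _))

/-- The acceptable schools of `p` (those preferred to the outside option), in preference
order. -/
def acceptables (p : List (Option S)) : List S := (p.takeWhile Option.isSome).filterMap id

/-- The truncation of `p` after its `k`-th acceptable school: the preference relation
listing, in the same order, only the `min k _` most-preferred acceptable schools of `p`,
all other schools being unacceptable (kept below `none` in their original order). -/
def truncate (p : List (Option S)) (k : ℕ) : List (Option S) :=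
  ((acceptables p).take k).map some ++
    none :: p.filter (fun x => decide (x ≠ none ∧ x ∉ ((acceptables p).take k).map some))

/-- `μ` is a matching: it respects the capacities `q`. -/
def IsMatching (q : S → ℕ) (μ : I → Option S) : Prop :=
  ∀ s : S, (Finset.univ.filter (fun i => μ i = some s)).card ≤ q s

/-- The pair `(i, s)` blocks `μ` under the problem `(P, prio, q)`. -/
def Blocks (P : I → List (Option S)) (prio : S → List I) (q : S → ℕ)
    (μ : I → Option S) (i : I) (s : S) : Prop :=
  prefLt (P i) (some s) (μ i) ∧
    ((Finset.univ.filter (fun j => μ j = some s)).card < q s ∨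
      ∃ j : I, μ j = some s ∧ prioLt (prio s) i j)

/-- `i` is a blocking student for `μ` under `(P, prio, q)`. -/
def BlockingStudent (P : I → List (Option S)) (prio : S → List I) (q : S → ℕ)
    (μ : I → Option S) (i : I) : Prop :=
  ∃ s : S, Blocks P prio q μ i s

/-- `μ` is individually rational under `P`. -/
def IndividuallyRational (P : I → List (Option S)) (μ : I → Option S) : Prop :=
  ∀ i : I, ¬ prefLt (P i) none (μ i)

/-- `μ` is stable at `(P, prio, q)`. -/
def IsStable (P : I → List (Option S)) (prio : S → List I) (q : S → ℕ)
    (μ : I → Option S) : Prop :=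
  IndividuallyRational P μ ∧ ∀ i : I, ¬ BlockingStudent P prio q μ i

/-- The number of blocking students for `μ` under `(P, prio, q)`. -/
noncomputable def numBlocking (P : I → List (Option S)) (prio : S → List I) (q : S → ℕ)
    (μ : I → Option S) : ℕ :=
  {i : I | BlockingStudent P prio q μ i}.ncard

/-! ### The Gale–Shapley student-proposing deferred acceptance mechanism

The state `σ : I → ℕ` records, for each student, how many of her acceptable schools
have already rejected her; she currently applies to the `σ i`-th school on her list
(if any).  At each round every school tentatively keeps the `q s` highest-priority
students among its current applicants and rejects the rest, who move on. -/

/-- The school student `i` currently applies to. -/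
def daTarget (P : I → List (Option S)) (σ : I → ℕ) (i : I) : Option S :=
  (acceptables (P i))[σ i]?

/-- The students tentatively held by school `s`: the `q s` highest-priority current
applicants. -/
def daHeld (P : I → List (Option S)) (prio : S → List I) (q : S → ℕ)
    (σ : I → ℕ) (s : S) : List I :=
  ((prio s).filter (fun i => decide (daTarget P σ i = some s))).take (q s)

/-- One round of deferred acceptance: every rejected student moves to her next choice. -/
def daStep (P : I → List (Option S)) (prio : S → List I) (q : S → ℕ)
    (σ : I → ℕ) : I → ℕ := fun i =>
  match daTarget P σ i with
  | none => σ i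
  | some s => if i ∈ daHeld P prio q σ s then σ i else σ i + 1

/-- The Gale–Shapley (student-proposing deferred acceptance) mechanism.  Iterating the
round map `|I| * |S| + 1` times is guaranteed to reach the terminal state. -/
def GS (P : I → List (Option S)) (prio : S → List I) (q : S → ℕ) : I → Option S :=
  fun i =>
    let σ := (daStep P prio q)^[Fintype.card I * Fintype.card S + 1] (fun _ => 0)
    match daTarget P σ i with
    | none => none
    | some s => if i ∈ daHeld P prio q σ s then some s else none

/-- The constrained Gale–Shapley mechanism `GS^k`. -/
def GSk (k : ℕ) (P : I → List (Option S)) (prio : S → List I) (q : S → ℕ) : I → Option S :=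
  GS (fun i => truncate (P i) k) prio q

/-! ### The Boston (immediate acceptance) mechanism -/

/-- Round `t` of the Boston mechanism: each not-yet-accepted student applies to her
`t`-th ranked acceptable school (0-indexed), and each school permanently accepts, up to
its remaining capacity, its highest-priority new applicants. -/
def bostonRound (P : I → List (Option S)) (prio : S → List I) (q : S → ℕ)
    (μ : I → Option S) (t : ℕ) : I → Option S := fun i =>
  match μ i with
  | some s => some s
  | none =>
    match (acceptables (P i))[t]? with
    | none => none
    | some s =>
      if i ∈ ((prio s).filter
            (fun j => decide (μ j = none ∧ (acceptables (P j))[t]? = some s))).take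
          (q s - (Finset.univ.filter (fun j => μ j = some s)).card)
      then some s else none

/-- The Boston (immediate acceptance) mechanism. -/
def Boston (P : I → List (Option S)) (prio : S → List I) (q : S → ℕ) : I → Option S :=
  (List.range (Fintype.card S)).foldl (bostonRound P prio q) (fun _ => none)

/-- The constrained Boston mechanism `β^k`. -/
def Bostonk (k : ℕ) (P : I → List (Option S)) (prio : S → List I) (q : S → ℕ) :
    I → Option S :=
  Boston (fun i => truncate (P i) k) prio q

/-! ### The first-preference-first mechanism -/

/-- The adjusted priority profile: each first-preference-first school (member of `fpf`)
ranks students first by the rank they assign to it under `P` (counting the ranking of the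
outside option as well), ties broken by the original priority; equal-preference schools
keep their original priority. -/
def fpfPrio (fpf : Finset S) (P : I → List (Option S)) (prio : S → List I) : S → List I :=
  fun s =>
    if s ∈ fpf then
      (List.range (Fintype.card S + 1)).flatMap
        (fun r => (prio s).filter (fun i => decide ((P i).idxOf (some s) = r)))
    else prio s

/-- The first-preference-first mechanism with set `fpf` of first-preference-first
schools: Gale–Shapley run on the adjusted priorities. -/
def FPF (fpf : Finset S) (P : I → List (Option S)) (prio : S → List I) (q : S → ℕ) :
    I → Option S :=
  GS P (fpfPrio fpf P prio) q

/-- The constrained first-preference-first mechanism `FPF^k`. -/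
def FPFk (fpf : Finset S) (k : ℕ) (P : I → List (Option S)) (prio : S → List I)
    (q : S → ℕ) : I → Option S :=
  FPF fpf (fun i => truncate (P i) k) prio q

/-! ### Manipulation and equilibrium notions -/

/-- Student `i` is a manipulating student of the mechanism `φ` (with priorities and
capacities fixed) at the true profile `P`. -/
def ManipulatingStudent (φ : (I → List (Option S)) → I → Option S)
    (P : I → List (Option S)) (i : I) : Prop :=
  ∃ Q : List (Option S), ValidPref Q ∧
    prefLt (P i) (φ (Function.update P i Q) i) (φ P i)

/-- The mechanism `φ` is not manipulable at `P`. -/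
def NotManipulable (φ : (I → List (Option S)) → I → Option S)
    (P : I → List (Option S)) : Prop :=
  ∀ i : I, ¬ ManipulatingStudent φ P i

/-- `P'` is a Nash equilibrium of the game `(φ, P)` in which the sophisticated students
are the members of `M` (who may misreport, and best respond) and all other (sincere)
students report truthfully. -/
def NashEq (φ : (I → List (Option S)) → I → Option S) (P : I → List (Option S))
    (M : Finset I) (P' : I → List (Option S)) : Prop :=
  (∀ i, ValidPref (P' i)) ∧ (∀ i ∉ M, P' i = P i) ∧
    ∀ i ∈ M, ∀ Q : List (Option S), ValidPref Q →
      ¬ prefLt (P i) (φ (Function.update P' i Q) i) (φ P' i)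

/-! ### Semi-sophisticated students -/

/-- Student `i` is guaranteed her first choice `s`: `s` is her most-preferred acceptable
school and `i` is among the `q s` highest-priority students at `s`. -/
def GuaranteedFirstChoice (P : I → List (Option S)) (prio : S → List I) (q : S → ℕ)
    (i : I) (s : S) : Prop :=
  (acceptables (P i)).head? = some s ∧ (prio s).idxOf i < q s

instance (P : I → List (Option S)) (prio : S → List I) (q : S → ℕ) (i : I) (s : S) :
    Decidable (GuaranteedFirstChoice P prio q i s) :=
  inferInstanceAs (Decidable (_ ∧ _))

/-- School `s` is competitive: at least `q s` students are guaranteed their first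
choice `s`. -/
def Competitive (P : I → List (Option S)) (prio : S → List I) (q : S → ℕ) (s : S) : Prop :=
  q s ≤ (Finset.univ.filter (fun i => GuaranteedFirstChoice P prio q i s)).card

instance (P : I → List (Option S)) (prio : S → List I) (q : S → ℕ) (s : S) :
    Decidable (Competitive P prio q s) :=
  inferInstanceAs (Decidable (_ ≤ _))

/-- `P'` is a Nash equilibrium of the game `(GS^ℓ, P)` with semi-sophisticated students:
every student guaranteed her first choice reports truthfully; every other student reports
truthfully if she has at most `ℓ` acceptable schools or all her acceptable schools are
competitive, and otherwise lists as acceptable, in the order given by her true preference,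
only her acceptable schools that are not competitive. -/
def SemiSophProfile (ℓ : ℕ) (P : I → List (Option S)) (prio : S → List I) (q : S → ℕ)
    (P' : I → List (Option S)) : Prop :=
  ∀ i : I,
    ((∃ s : S, GuaranteedFirstChoice P prio q i s) → P' i = P i) ∧
    (¬ (∃ s : S, GuaranteedFirstChoice P prio q i s) →
      (((acceptables (P i)).length ≤ ℓ ∨ ∀ s ∈ acceptables (P i), Competitive P prio q s) →
          P' i = P i) ∧
      (¬ ((acceptables (P i)).length ≤ ℓ ∨
            ∀ s ∈ acceptables (P i), Competitive P prio q s) →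
          acceptables (P' i) =
            (acceptables (P i)).filter (fun s => decide (¬ Competitive P prio q s))))

end SchoolChoice

/-!
Both mechanisms are deferred acceptance, and deferred acceptance is student-optimal among
stable matchings: a student is never rejected by a school that she attends in some stable
matching. Let `μ = GS^k(P)` be stable at `P` and `ν = GS(P)`, so every student weakly prefers
`ν` to `μ`. A school filling more seats under `ν` than under `μ` would have a free seat under `μ`
wanted by one of its `ν`-students; hence no school does, and `μ`, `ν` leave the same students
unmatched. So `ν` assigns only top-`k` choices, is therefore stable at the truncated profile
`P^k`, and there it is weakly dominated by `GS(P^k) = μ`. As `P` and `P^k` rank the top-`k`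
choices alike, `μ = ν`.
-/

namespace List

variable {α : Type*}

theorem Pairwise.rel_of_mem_take_of_notMem_take {R : α → α → Prop} {l : List α}
    (hl : l.Pairwise R) {n : ℕ} {x y : α} (hx : x ∈ l) (hxn : x ∉ l.take n)
    (hy : y ∈ l.take n) : R y x := by
  rw [← take_append_drop n l] at hl hx
  exact (pairwise_append.1 hl).2.2 y hy x ((mem_append.1 hx).resolve_left hxn)

theorem length_take_of_notMem_take {l : List α} {n : ℕ} {x : α} (hx : x ∈ l)
    (hxn : x ∉ l.take n) : (l.take n).length = n := by
  rw [length_take, Nat.min_eq_left]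
  by_contra h
  exact hxn (by rwa [take_of_length_le (by omega)])

variable [BEq α] [LawfulBEq α]

theorem Nodup.pairwise_idxOf_lt {l : List α} (hl : l.Nodup) :
    l.Pairwise (fun a b => l.idxOf a < l.idxOf b) := by
  rw [pairwise_iff_getElem]
  intro i j hi hj hij
  rwa [hl.idxOf_getElem i hi, hl.idxOf_getElem j hj]

theorem IsPrefix.getElem?_eq_some_iff {L l : List α} (h : L <+: l) (hl : l.Nodup) {n : ℕ}
    {x : α} : L[n]? = some x ↔ l.idxOf x = n ∧ n < L.length := by
  constructor
  · intro hx
    obtain ⟨hn, rfl⟩ := List.getElem?_eq_some_iff.1 hx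
    rw [← h.idxOf_eq_of_mem (getElem_mem hn), (hl.sublist h.sublist).idxOf_getElem n hn]
    exact ⟨rfl, hn⟩
  · rintro ⟨rfl, hn⟩
    have hx : x ∈ L := (h.mem_iff_idxOf_lt_length x).2 hn
    rw [← h.idxOf_eq_of_mem hx]
    exact getElem?_idxOf hx

theorem IsPrefix.mem_of_idxOf_le {A l : List α} (h : A <+: l) {a b : α} (hb : b ∈ A)
    (hab : l.idxOf a ≤ l.idxOf b) : a ∈ A := by
  rw [h.mem_iff_idxOf_lt_length] at hb ⊢
  omega

theorem idxOf_lt_idxOf_iff_of_isPrefix {A l₁ l₂ : List α} (h₁ : A <+: l₁) (h₂ : A <+: l₂)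
    {x a b : α} (hx : x ∉ A) (ha : a ∈ A ∨ a = x) (hb : b ∈ A ∨ b = x) :
    l₁.idxOf a < l₁.idxOf b ↔ l₂.idxOf a < l₂.idxOf b := by
  suffices key : ∀ l, A <+: l →
      (l.idxOf a < l.idxOf b ↔ a ∈ A ∧ (b ∈ A → A.idxOf a < A.idxOf b)) by
    rw [key l₁ h₁, key l₂ h₂]
  intro l h
  have hxl : A.length ≤ l.idxOf x := not_lt.1 ((h.mem_iff_idxOf_lt_length x).not.1 hx)
  have hmem : ∀ {c}, c ∈ A → l.idxOf c = A.idxOf c ∧ A.idxOf c < A.length :=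
    fun hc => ⟨(h.idxOf_eq_of_mem hc).symm, idxOf_lt_length_of_mem hc⟩
  rcases ha with ha | rfl <;> rcases hb with hb | rfl
  · simp [ha, hb, (hmem ha).1, (hmem hb).1]
  · simp only [ha, hx, false_imp_iff, and_true, iff_true]
    have := hmem ha
    omega
  · simp only [hx, false_and, iff_false, not_lt]
    have := hmem hb
    omega
  · simp [hx]

end List

namespace Function

theorem isFixedPt_iterate_of_measure_lt {α : Type*} {f : α → α} (m : α → ℕ) {B : ℕ}
    (hB : ∀ a, m a ≤ B) (hf : ∀ a, f a ≠ a → m a < m (f a)) (a : α) :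
    IsFixedPt f (f^[B + 1] a) := by
  have key : ∀ n, (∃ t ≤ n, IsFixedPt f (f^[t] a)) ∨ n ≤ m (f^[n] a) := by
    intro n
    induction n with
    | zero => exact Or.inr (Nat.zero_le _)
    | succ n ih =>
      by_cases hn : IsFixedPt f (f^[n] a)
      · exact Or.inl ⟨n, n.le_succ, hn⟩
      rcases ih with ⟨t, ht, hfix⟩ | ih
      · exact Or.inl ⟨t, ht.trans n.le_succ, hfix⟩
      · rw [iterate_succ_apply']
        exact Or.inr (by have := hf _ hn; omega)
  obtain ⟨t, ht, hfix⟩ := (key (B + 1)).resolve_right (by have := hB (f^[B + 1] a); omega)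
  rwa [← Nat.sub_add_cancel ht, iterate_add_apply, (hfix.iterate _).eq]

end Function

namespace SchoolChoice

open Finset

variable {I S : Type*}

section Preferences

theorem map_some_acceptables (p : List (Option S)) :
    (acceptables p).map some = p.takeWhile Option.isSome := by
  rw [acceptables, List.map_filterMap_some_eq_filter_map_isSome, List.map_id,
    List.filter_eq_self.2 fun _ hx => List.mem_takeWhile_imp hx]

theorem acceptables_map_some_append_none (l : List S) (r : List (Option S)) :
    acceptables (l.map some ++ none :: r) = l := by
  simp [acceptables, List.takeWhile_append_of_pos, List.filterMap_map]

theorem none_notMem_map_some (l : List S) : none ∉ l.map some := by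
  simp

theorem acceptables_append_none_isPrefix {p : List (Option S)} (hp : none ∈ p) :
    (acceptables p).map some ++ [none] <+: p := by
  rw [map_some_acceptables]
  have hdrop := List.takeWhile_append_dropWhile (p := Option.isSome) (l := p)
  rcases h : p.dropWhile Option.isSome with _ | ⟨a, r⟩
  · rw [h, List.append_nil] at hdrop
    exact absurd (List.mem_takeWhile_imp (hdrop.symm ▸ hp)) (by simp)
  · obtain rfl : a = none := by simpa [h] using List.head?_dropWhile_not Option.isSome p
    exact ⟨r, by rw [List.append_assoc, List.singleton_append, ← h, hdrop]⟩

theorem take_acceptables_isPrefix (p : List (Option S)) (k : ℕ) :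
    ((acceptables p).take k).map some <+: p := by
  rw [List.map_take, map_some_acceptables]
  exact (List.take_prefix _ _).trans (List.takeWhile_prefix _)

variable [DecidableEq S] {p : List (Option S)}

theorem idxOf_none_eq_length_acceptables (hp : none ∈ p) :
    p.idxOf none = (acceptables p).length := by
  rw [← (acceptables_append_none_isPrefix hp).idxOf_eq_of_mem (by simp),
    List.idxOf_append_of_notMem (by simp)]
  simp

theorem not_prefLt_none_iff (hp : none ∈ p) {x : Option S} :
    ¬ prefLt p none x ↔ x ∈ (acceptables p).map some ∨ x = none := by
  have h := acceptables_append_none_isPrefix hp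
  rw [← List.mem_singleton, ← List.mem_append, h.mem_iff_idxOf_lt_length, prefLt,
    idxOf_none_eq_length_acceptables hp]
  simp only [List.length_append, List.length_map, List.length_singleton]
  omega

theorem prefLt_of_idxOf_le_of_ne (hp : ValidPref p) {a b : Option S}
    (hab : p.idxOf a ≤ p.idxOf b) (hne : a ≠ b) : prefLt p a b :=
  lt_of_le_of_ne hab fun h => hne ((List.idxOf_inj (hp.2 a)).1 h)

theorem eq_of_not_prefLt_of_not_prefLt (hp : ValidPref p) {a b : Option S}
    (hab : ¬ prefLt p a b) (hba : ¬ prefLt p b a) : a = b :=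
  (List.idxOf_inj (hp.2 a)).1 (by unfold prefLt at hab hba; omega)

theorem acceptables_truncate (p : List (Option S)) (k : ℕ) :
    acceptables (truncate p k) = (acceptables p).take k :=
  acceptables_map_some_append_none _ _

theorem validPref_truncate (hp : ValidPref p) (k : ℕ) : ValidPref (truncate p k) := by
  have hacc : (acceptables p).Nodup := by
    have := hp.1.sublist (List.takeWhile_sublist Option.isSome)
    rw [← map_some_acceptables] at this
    exact this.of_map _
  refine ⟨?_, fun x => ?_⟩
  · refine List.nodup_append.2 ⟨((hacc.sublist (List.take_sublist _ _)).map
      (fun _ _ => Option.some.inj)), List.nodup_cons.2 ⟨by simp, hp.1.filter _⟩, ?_⟩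
    intro x hx y hy
    rcases List.mem_cons.1 hy with rfl | hy
    · rintro rfl
      exact none_notMem_map_some _ hx
    · rintro rfl
      simp_all
  · by_cases hx : x ∈ ((acceptables p).take k).map some
    · exact List.mem_append_left _ hx
    · rcases x with _ | s
      · simp [truncate]
      · exact List.mem_append_right _ (List.mem_cons_of_mem _ (List.mem_filter.2
          ⟨hp.2 _, by simpa using hx⟩))

theorem not_prefLt_none_truncate_iff (k : ℕ) {x : Option S} :
    ¬ prefLt (truncate p k) none x ↔ x ∈ ((acceptables p).take k).map some ∨ x = none := by
  rw [not_prefLt_none_iff (by simp [truncate]), acceptables_truncate]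

theorem prefLt_truncate_iff {k : ℕ} {a b : Option S} (ha : ¬ prefLt (truncate p k) none a)
    (hb : ¬ prefLt (truncate p k) none b) : prefLt (truncate p k) a b ↔ prefLt p a b :=
  List.idxOf_lt_idxOf_iff_of_isPrefix ⟨_, rfl⟩ (take_acceptables_isPrefix p k)
    (none_notMem_map_some _) ((not_prefLt_none_truncate_iff k).1 ha)
    ((not_prefLt_none_truncate_iff k).1 hb)

theorem mem_of_not_prefLt {k : ℕ} {a b : Option S}
    (hb : b ∈ ((acceptables p).take k).map some) (h : ¬ prefLt p b a) :
    a ∈ ((acceptables p).take k).map some :=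
  (take_acceptables_isPrefix p k).mem_of_idxOf_le hb (not_lt.1 h)

end Preferences

section DeferredAcceptance

variable [DecidableEq S] {P : I → List (Option S)}
  {prio : S → List I} {q : S → ℕ} {σ : I → ℕ} {i : I} {s : S}

theorem daTarget_eq_some_iff (hp : ValidPref (P i)) :
    daTarget P σ i = some s ↔ (P i).idxOf (some s) = σ i ∧ σ i < (P i).idxOf none := by
  have h := (List.prefix_append _ _).trans (acceptables_append_none_isPrefix (hp.2 none))
  have hmap : (acceptables (P i))[σ i]? = some s ↔
      ((acceptables (P i)).map some)[σ i]? = some (some s) := by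
    simp [List.getElem?_map]
  rw [daTarget, hmap, h.getElem?_eq_some_iff hp.1, List.length_map,
    idxOf_none_eq_length_acceptables (hp.2 none)]

theorem daTarget_eq_none_iff (hp : ValidPref (P i)) :
    daTarget P σ i = none ↔ (P i).idxOf none ≤ σ i := by
  rw [daTarget, List.getElem?_eq_none_iff, idxOf_none_eq_length_acceptables (hp.2 none)]

theorem daTarget_of_mem_daHeld (h : i ∈ daHeld P prio q σ s) : daTarget P σ i = some s := by
  simpa using (List.mem_filter.1 (List.mem_of_mem_take h)).2

theorem nodup_daHeld (hprio : ValidPrio (prio s)) : (daHeld P prio q σ s).Nodup :=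
  (hprio.1.filter _).sublist (List.take_sublist _ _)

theorem length_daHeld_of_notMem {j : I} (hprio : ValidPrio (prio s))
    (ht : daTarget P σ j = some s) (hj : j ∉ daHeld P prio q σ s) :
    (daHeld P prio q σ s).length = q s :=
  List.length_take_of_notMem_take (List.mem_filter.2 ⟨hprio.2 j, by simpa using ht⟩) hj

variable [DecidableEq I]

theorem prioLt_of_mem_daHeld_of_notMem {j x : I} (hprio : ValidPrio (prio s))
    (ht : daTarget P σ j = some s) (hj : j ∉ daHeld P prio q σ s)
    (hx : x ∈ daHeld P prio q σ s) : prioLt (prio s) x j :=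
  (hprio.1.pairwise_idxOf_lt.filter _).rel_of_mem_take_of_notMem_take
    (List.mem_filter.2 ⟨hprio.2 j, by simpa using ht⟩) hj hx

theorem daStep_of_mem_daHeld (h : i ∈ daHeld P prio q σ s) : daStep P prio q σ i = σ i := by
  simp [daStep, daTarget_of_mem_daHeld h, h]

theorem daTarget_daStep_of_mem_daHeld (h : i ∈ daHeld P prio q σ s) :
    daTarget P (daStep P prio q σ) i = some s := by
  rw [daTarget, daStep_of_mem_daHeld h]
  exact daTarget_of_mem_daHeld h

theorem daStep_eq_or (σ : I → ℕ) (i : I) :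
    daStep P prio q σ i = σ i ∨ ∃ s, daTarget P σ i = some s ∧ i ∉ daHeld P prio q σ s ∧
      daStep P prio q σ i = σ i + 1 := by
  unfold daStep
  split
  · exact Or.inl rfl
  · split_ifs with h
    · exact Or.inl rfl
    · exact Or.inr ⟨_, ‹_›, h, rfl⟩

theorem le_daStep (σ : I → ℕ) (i : I) : σ i ≤ daStep P prio q σ i := by
  rcases daStep_eq_or (P := P) (prio := prio) (q := q) σ i with h | ⟨_, _, _, h⟩ <;> omega

theorem mem_daHeld_of_isFixedPt (hσ : Function.IsFixedPt (daStep P prio q) σ)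
    (h : daTarget P σ i = some s) : i ∈ daHeld P prio q σ s := by
  by_contra hi
  simpa [daStep, h, hi] using congrFun hσ i

end DeferredAcceptance

section GaleShapley

variable [Fintype I] [DecidableEq I] [DecidableEq S]
  {P : I → List (Option S)} {prio : S → List I} {q : S → ℕ} {σ : I → ℕ}

def applicantsAbove (P : I → List (Option S)) (prio : S → List I) (σ : I → ℕ) (s : S)
    (i : I) : Finset I :=
  {j | daTarget P σ j = some s ∧ prioLt (prio s) j i}

@[simp]
theorem mem_applicantsAbove {s : S} {i j : I} :
    j ∈ applicantsAbove P prio σ s i ↔ daTarget P σ j = some s ∧ prioLt (prio s) j i := by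
  simp [applicantsAbove]

theorem applicantsAbove_mono {s : S} {i j : I} (hji : prioLt (prio s) j i) :
    applicantsAbove P prio σ s j ⊆ applicantsAbove P prio σ s i :=
  fun x hx => by
    rw [mem_applicantsAbove] at hx ⊢
    exact ⟨hx.1, lt_trans hx.2 hji⟩

theorem le_card_applicantsAbove_daStep {j : I} {s : S} (hprio : ValidPrio (prio s))
    (ht : daTarget P σ j = some s) (hj : j ∉ daHeld P prio q σ s) :
    q s ≤ #(applicantsAbove P prio (daStep P prio q σ) s j) := by
  rw [← length_daHeld_of_notMem hprio ht hj,
    ← List.toFinset_card_of_nodup (nodup_daHeld hprio)]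
  refine card_le_card fun x hx => ?_
  rw [List.mem_toFinset] at hx
  rw [mem_applicantsAbove]
  exact ⟨daTarget_daStep_of_mem_daHeld hx, prioLt_of_mem_daHeld_of_notMem hprio ht hj hx⟩

def RejectionsJustified (P : I → List (Option S)) (prio : S → List I) (q : S → ℕ)
    (σ : I → ℕ) : Prop :=
  ∀ i s, (P i).idxOf (some s) < σ i → q s ≤ #(applicantsAbove P prio σ s i)

theorem rejectionsJustified_daStep (hP : ∀ i, ValidPref (P i))
    (hprio : ∀ s, ValidPrio (prio s)) (h : RejectionsJustified P prio q σ) :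
    RejectionsJustified P prio q (daStep P prio q σ) := by
  intro i s hlt
  by_cases hold : (P i).idxOf (some s) < σ i
  · by_cases hheld : ∀ j, daTarget P σ j = some s → prioLt (prio s) j i →
        j ∈ daHeld P prio q σ s
    · refine (h i s hold).trans (card_le_card fun j hj => ?_)
      rw [mem_applicantsAbove] at hj ⊢
      exact ⟨daTarget_daStep_of_mem_daHeld (hheld j hj.1 hj.2), hj.2⟩
    · push Not at hheld
      obtain ⟨j, ht, hji, hj⟩ := hheld
      exact (le_card_applicantsAbove_daStep (hprio s) ht hj).trans
        (card_le_card (applicantsAbove_mono hji))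
  · rcases daStep_eq_or (P := P) (prio := prio) (q := q) σ i with hσ | ⟨t, ht, hi, hσ⟩
    · exact absurd (hσ ▸ hlt) hold
    obtain rfl : t = s := by
      have := ((daTarget_eq_some_iff (hP i)).1 ht).1
      exact Option.some_inj.1 ((List.idxOf_inj ((hP i).2 _)).1 (by omega))
    exact le_card_applicantsAbove_daStep (hprio t) ht hi

theorem exists_blockingStudent_of_notMem_daHeld {μ : I → Option S} {j : I} {t : S}
    (hP : ∀ i, ValidPref (P i)) (hprio : ValidPrio (prio t)) (hμ : IsMatching q μ)
    (hσμ : ∀ i, σ i ≤ (P i).idxOf (μ i)) (ht : daTarget P σ j = some t)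
    (hj : j ∉ daHeld P prio q σ t) (hjt : μ j = some t) :
    ∃ x, BlockingStudent P prio q μ x := by
  set H := daHeld P prio q σ t
  obtain ⟨x, hx, hxt⟩ : ∃ x ∈ H, μ x ≠ some t := by
    by_contra! hall
    have hsub : insert j H.toFinset ⊆ ({i | μ i = some t} : Finset I) := by
      intro i hi
      rcases mem_insert.1 hi with rfl | hi
      · simpa using hjt
      · simpa using hall i (List.mem_toFinset.1 hi)
    have := card_le_card hsub
    rw [card_insert_of_notMem (by simpa using hj), List.toFinset_card_of_nodup
      (nodup_daHeld hprio), length_daHeld_of_notMem hprio ht hj] at this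
    exact absurd (hμ t) (by omega)
  have hxt' := ((daTarget_eq_some_iff (hP x)).1 (daTarget_of_mem_daHeld hx)).1
  refine ⟨x, t, prefLt_of_idxOf_le_of_ne (hP x) (hxt' ▸ hσμ x) hxt.symm,
    Or.inr ⟨j, hjt, prioLt_of_mem_daHeld_of_notMem hprio ht hj hx⟩⟩

theorem daStep_le_idxOf_of_isStable {μ : I → Option S} (hP : ∀ i, ValidPref (P i))
    (hprio : ∀ s, ValidPrio (prio s)) (hμ : IsMatching q μ) (hst : IsStable P prio q μ)
    (hσμ : ∀ i, σ i ≤ (P i).idxOf (μ i)) (i : I) :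
    daStep P prio q σ i ≤ (P i).idxOf (μ i) := by
  rcases daStep_eq_or (P := P) (prio := prio) (q := q) σ i with hσ | ⟨t, ht, hi, hσ⟩
  · exact hσ ▸ hσμ i
  rw [hσ, Nat.add_one_le_iff]
  refine lt_of_le_of_ne (hσμ i) fun he => ?_
  have hit : μ i = some t := ((List.idxOf_inj ((hP i).2 _)).1
    (((daTarget_eq_some_iff (hP i)).1 ht).1.trans he)).symm
  obtain ⟨x, hx⟩ := exists_blockingStudent_of_notMem_daHeld hP (hprio t) hμ hσμ ht hi hit
  exact hst.2 x hx

variable [Fintype S]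

def daFinal (P : I → List (Option S)) (prio : S → List I) (q : S → ℕ) : I → ℕ :=
  (daStep P prio q)^[Fintype.card I * Fintype.card S + 1] (fun _ => 0)

theorem isFixedPt_daFinal (hP : ∀ i, ValidPref (P i)) :
    Function.IsFixedPt (daStep P prio q) (daFinal P prio q) := by
  refine Function.isFixedPt_iterate_of_measure_lt (fun σ => ∑ i, min (σ i) (Fintype.card S))
    (fun σ => ?_) (fun σ hσ => ?_) _
  · calc ∑ i, min (σ i) (Fintype.card S) ≤ ∑ _i : I, Fintype.card S :=
          sum_le_sum fun i _ => min_le_right _ _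
      _ = Fintype.card I * Fintype.card S := by simp
  · obtain ⟨i, hi⟩ := Function.ne_iff.1 hσ
    refine sum_lt_sum (fun j _ => min_le_min_right _ (le_daStep σ j)) ⟨i, mem_univ _, ?_⟩
    rcases daStep_eq_or (P := P) (prio := prio) (q := q) σ i with hσ | ⟨t, ht, _, hσ⟩
    · exact absurd hσ hi
    have hlt := ((daTarget_eq_some_iff (hP i)).1 ht).2
    have hcard : (P i).idxOf none ≤ Fintype.card S := by
      have := (hP i).1.length_le_card
      rw [Fintype.card_option] at this
      have := List.idxOf_lt_length_of_mem ((hP i).2 none)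
      omega
    rw [hσ]
    omega

theorem GS_eq_daTarget (hP : ∀ i, ValidPref (P i)) :
    GS P prio q = daTarget P (daFinal P prio q) := by
  funext i
  rw [GS, ← daFinal]
  rcases h : daTarget P (daFinal P prio q) i with _ | s
  · rfl
  · exact if_pos (mem_daHeld_of_isFixedPt (isFixedPt_daFinal hP) h)

theorem idxOf_GS_le (hP : ∀ i, ValidPref (P i)) (i : I) :
    (P i).idxOf (GS P prio q i) ≤ min (daFinal P prio q i) ((P i).idxOf none) := by
  rw [GS_eq_daTarget hP]
  rcases h : daTarget P (daFinal P prio q) i with _ | s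
  · have := (daTarget_eq_none_iff (hP i)).1 h
    omega
  · have := (daTarget_eq_some_iff (hP i)).1 h
    omega

theorem isMatching_GS (hP : ∀ i, ValidPref (P i)) : IsMatching q (GS P prio q) := by
  intro s
  calc #{i | GS P prio q i = some s} ≤ (daHeld P prio q (daFinal P prio q) s).toFinset.card :=
        card_le_card fun i hi => by
          rw [mem_filter, GS_eq_daTarget hP] at hi
          exact List.mem_toFinset.2 (mem_daHeld_of_isFixedPt (isFixedPt_daFinal hP) hi.2)
    _ ≤ q s := (List.toFinset_card_le _).trans (List.length_take_le _ _)

theorem rejectionsJustified_daFinal (hP : ∀ i, ValidPref (P i))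
    (hprio : ∀ s, ValidPrio (prio s)) : RejectionsJustified P prio q (daFinal P prio q) := by
  unfold daFinal
  exact Function.Iterate.rec _ (fun _ _ h => absurd h (Nat.not_lt_zero _))
    (fun _ => rejectionsJustified_daStep hP hprio) _

theorem isStable_GS (hP : ∀ i, ValidPref (P i)) (hprio : ∀ s, ValidPrio (prio s)) :
    IsStable P prio q (GS P prio q) := by
  refine ⟨fun i => not_lt.2 ((idxOf_GS_le hP i).trans (min_le_right _ _)), ?_⟩
  rintro i ⟨s, hpref, hfree⟩
  have hle := rejectionsJustified_daFinal hP hprio i s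
    (lt_of_lt_of_le hpref ((idxOf_GS_le hP i).trans (min_le_left _ _)))
  have hsub : applicantsAbove P prio (daFinal P prio q) s i ⊆
      ({j | GS P prio q j = some s} : Finset I) := fun j hj => by
    rw [mem_applicantsAbove] at hj
    simpa [GS_eq_daTarget hP] using hj.1
  rcases hfree with hfree | ⟨j, hj, hij⟩
  · exact absurd (card_le_card hsub) (by omega)
  · have hj' : j ∉ applicantsAbove P prio (daFinal P prio q) s i := by
      rw [mem_applicantsAbove, not_and]
      exact fun _ hji => lt_asymm hij hji
    have := card_le_card (insert_subset (by simpa using hj) hsub)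
    rw [card_insert_of_notMem hj'] at this
    exact absurd (isMatching_GS (prio := prio) (q := q) hP s) (by omega)

theorem not_prefLt_GS_of_isStable {μ : I → Option S} (hP : ∀ i, ValidPref (P i))
    (hprio : ∀ s, ValidPrio (prio s)) (hμ : IsMatching q μ) (hst : IsStable P prio q μ)
    (i : I) : ¬ prefLt (P i) (μ i) (GS P prio q i) := by
  have hσμ : ∀ j, daFinal P prio q j ≤ (P j).idxOf (μ j) := by
    unfold daFinal
    exact Function.Iterate.rec _ (fun _ => Nat.zero_le _)
      (fun _ => daStep_le_idxOf_of_isStable hP hprio hμ hst) _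
  exact not_lt.2 (((idxOf_GS_le hP i).trans (min_le_left _ _)).trans (hσμ i))

end GaleShapley

section Comparison

variable [Fintype I] [DecidableEq S]

theorem card_eq_none_add_sum_card_eq_some [Fintype S] (f : I → Option S) :
    #{i | f i = none} + ∑ s, #{i | f i = some s} = Fintype.card I := by
  rw [← Fintype.sum_option (fun o : Option S => #{i | f i = o}), ← card_univ,
    card_eq_sum_card_fiberwise (t := (univ : Finset (Option S))) fun _ _ => mem_univ _]

theorem eq_none_of_card_eq_some_le [Fintype S] {f g : I → Option S}
    (hgf : ∀ i, g i = none → f i = none)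
    (hcard : ∀ s, #{i | g i = some s} ≤ #{i | f i = some s}) {i : I} (hf : f i = none) :
    g i = none := by
  have hsub : ({i | g i = none} : Finset I) ⊆ ({i | f i = none} : Finset I) :=
    monotone_filter_right _ fun i _ => hgf i
  have hle : #{i | f i = none} ≤ #{i | g i = none} := by
    have := card_eq_none_add_sum_card_eq_some f
    have := card_eq_none_add_sum_card_eq_some g
    have := sum_le_sum fun s (_ : s ∈ univ) => hcard s
    omega
  have hi : i ∈ ({i | f i = none} : Finset I) := by simpa using hf
  simpa [← eq_of_subset_of_card_le hsub hle] using hi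

variable [DecidableEq I] {P : I → List (Option S)} {prio : S → List I} {q : S → ℕ}
  {μ ν : I → Option S}

theorem card_eq_some_le_of_isStable (hP : ∀ i, ValidPref (P i)) (hst : IsStable P prio q μ)
    (hν : IsMatching q ν) (hνμ : ∀ i, ¬ prefLt (P i) (μ i) (ν i)) (s : S) :
    #{i | ν i = some s} ≤ #{i | μ i = some s} := by
  by_contra! hlt
  obtain ⟨i, hiν, hiμ⟩ := not_subset.1 fun h => (card_le_card h).not_gt hlt
  simp only [mem_filter, mem_univ, true_and] at hiν hiμ
  exact hst.2 i ⟨s, prefLt_of_idxOf_le_of_ne (hP i) (not_lt.1 (hiν ▸ hνμ i)) (Ne.symm hiμ),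
    Or.inl (hlt.trans_le (hν s))⟩

theorem eq_none_of_isStable_of_not_prefLt [Fintype S] (hP : ∀ i, ValidPref (P i))
    (hst : IsStable P prio q μ) (hν : IsMatching q ν) (hνμ : ∀ i, ¬ prefLt (P i) (μ i) (ν i))
    {i : I} (hμ : μ i = none) : ν i = none :=
  eq_none_of_card_eq_some_le
    (fun i hi => eq_of_not_prefLt_of_not_prefLt (hP i) (hi ▸ hνμ i) (hst.1 i))
    (card_eq_some_le_of_isStable hP hst hν hνμ) hμ

theorem isStable_truncate {k : ℕ} (hst : IsStable P prio q ν)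
    (hIR : IndividuallyRational (fun i => truncate (P i) k) ν) :
    IsStable (fun i => truncate (P i) k) prio q ν := by
  refine ⟨hIR, fun i ⟨s, hpref, hfree⟩ => hst.2 i ⟨s, ?_, hfree⟩⟩
  exact (prefLt_truncate_iff (fun h => hIR i (lt_trans h hpref)) (hIR i)).1 hpref

end Comparison

theorem gsk_stable_iff_eq_gs_general
    {I S : Type*} [Fintype I] [DecidableEq I] [Fintype S] [DecidableEq S]
    (P : I → List (Option S)) (prio : S → List I) (q : S → ℕ)
    (hP : ∀ i, ValidPref (P i)) (hprio : ∀ s, ValidPrio (prio s))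
    (k : ℕ) :
    IsStable P prio q (GSk k P prio q) ↔ GSk k P prio q = GS P prio q := by
  refine ⟨fun hst => ?_, fun h => h ▸ isStable_GS hP hprio⟩
  have hPk : ∀ i, ValidPref (truncate (P i) k) := fun i => validPref_truncate (hP i) k
  have hstk : IsStable (fun i => truncate (P i) k) prio q (GSk k P prio q) :=
    isStable_GS hPk hprio
  have hνμ : ∀ i, ¬ prefLt (P i) (GSk k P prio q i) (GS P prio q i) :=
    not_prefLt_GS_of_isStable hP hprio (isMatching_GS hPk) hst
  have hIR : IndividuallyRational (fun i => truncate (P i) k) (GS P prio q) := by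
    intro i
    rw [not_prefLt_none_truncate_iff]
    rcases (not_prefLt_none_truncate_iff k).1 (hstk.1 i) with h | h
    · exact Or.inl (mem_of_not_prefLt h (hνμ i))
    · exact Or.inr (eq_none_of_isStable_of_not_prefLt hP hst (isMatching_GS hP) hνμ h)
  have hμν : ∀ i, ¬ prefLt (truncate (P i) k) (GS P prio q i) (GSk k P prio q i) :=
    not_prefLt_GS_of_isStable hPk hprio (isMatching_GS hP)
      (isStable_truncate (isStable_GS hP hprio) hIR)
  funext i
  exact eq_of_not_prefLt_of_not_prefLt (hP i) (hνμ i)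
    ((prefLt_truncate_iff (hIR i) (hstk.1 i)).not.1 (hμν i))

/-- Lemma 1: for `k > 1`, `GS^k(P,≻,q)` is stable at `(P,≻,q)` iff
`GS^k(P,≻,q) = GS(P,≻,q)`. -/
theorem gsk_stable_iff_eq_gs
    {I S : Type*} [Fintype I] [DecidableEq I] [Fintype S] [DecidableEq S]
    (hIS : Fintype.card S < Fintype.card I)
    (P : I → List (Option S)) (prio : S → List I) (q : S → ℕ)
    (hP : ∀ i, ValidPref (P i)) (hprio : ∀ s, ValidPrio (prio s))
    (k : ℕ) (hk : 1 < k) :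
    IsStable P prio q (GSk k P prio q) ↔ GSk k P prio q = GS P prio q :=
  gsk_stable_iff_eq_gs_general P prio q hP hprio k

end SchoolChoice
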